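/- arXiv:2306.14223 — 4 statements merged into one kernel-verified Lean document; each statement's English description precedes it below -/
import Mathlib

section
/- Let R be a semiprimary ring and e an idempotent of R. If the quotient ring R/ReR is quasi-hereditary, then there exists a finite chain of two-sided ideals R = I₀ ⊇ I₁ ⊇ ⋯ ⊇ I_l = ReR of R such that for each i ∈ [0, l−1] the image of I_i in R/I_{i+1} is a heredity ideal of R/I_{i+1}. -/
/-! Basic definitions: semiprimary rings, heredity ideals, quasi-hereditary rings. -/

variable {R : Type*} [Ring R]

/-- The two-sided ideal `ReR` generated by an element `e`. -/
def TwoSidedIdeal.gen (e : R) : TwoSidedIdeal R := TwoSidedIdeal.span {e}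

/-- A two-sided ideal is idempotent if it equals the two-sided ideal generated by
all products of two of its elements. -/
def TwoSidedIdeal.IsIdem (I : TwoSidedIdeal R) : Prop :=
  TwoSidedIdeal.span {y : R | ∃ a ∈ I, ∃ b ∈ I, y = a * b} = I

/-- A ring is semiprimary if its Jacobson radical `J` is nilpotent and `R/J` is semisimple.
(The Jacobson radical is always a two-sided ideal; we phrase this via the existence of a
two-sided ideal whose underlying set is the Jacobson radical.) -/
def IsSemiprimary (R : Type*) [Ring R] : Prop :=
  ∃ J : TwoSidedIdeal R, (J : Set R) = (Ideal.jacobson (⊥ : Ideal R) : Set R) ∧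
    (∃ k : ℕ, ∀ x : Fin (k + 1) → R, (∀ i, x i ∈ J) → (List.ofFn x).prod = 0) ∧
    IsSemisimpleRing J.ringCon.Quotient

/-- A heredity ideal: an idempotent two-sided ideal `H` which is projective as a right
`R`-module and satisfies `H · J(R) · H = 0`. -/
def IsHeredityIdeal (H : TwoSidedIdeal R) : Prop :=
  H.IsIdem ∧ Module.Projective Rᵐᵒᵖ H ∧
    ∀ a ∈ H, ∀ j ∈ Ideal.jacobson (⊥ : Ideal R), ∀ b ∈ H, a * j * b = 0

/-- A heredity chain is a finite decreasing chain of two-sided ideals from `R` to `0` such that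
each successive subquotient, viewed in the corresponding quotient ring, is a heredity ideal. -/
def IsHeredityChain {m : ℕ} (H : Fin (m + 1) → TwoSidedIdeal R) : Prop :=
  H 0 = ⊤ ∧ H (Fin.last m) = ⊥ ∧ Antitone H ∧
    ∀ i : Fin m, IsHeredityIdeal (TwoSidedIdeal.map (H i.succ).ringCon.mk' (H i.castSucc))

/-- A ring is quasi-hereditary if it is semiprimary and admits a heredity chain. -/
def IsQuasiHereditary (R : Type*) [Ring R] : Prop :=
  IsSemiprimary R ∧ ∃ (m : ℕ) (H : Fin (m + 1) → TwoSidedIdeal R), IsHeredityChain H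

/-!
Pull the heredity chain of `R/ReR` back along the quotient map `π : R → R/ReR`. The pulled-back
chain runs from `R` to `π⁻¹(0) = ReR`, and since `π` is surjective each quotient
`R/π⁻¹(Hᵢ₊₁)` is isomorphic to `(R/ReR)/Hᵢ₊₁`, compatibly with the images of `π⁻¹(Hᵢ)` and `Hᵢ`.
Being a heredity ideal is invariant under ring isomorphisms.
-/

namespace TwoSidedIdeal

variable {S T : Type*} [Ring S] [Ring T]

lemma mem_map_of_mem (f : R →+* S) {I : TwoSidedIdeal R} {x : R} (hx : x ∈ I) :
    f x ∈ I.map f :=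
  subset_span ⟨x, hx, rfl⟩

lemma map_le_iff_le_comap {f : R →+* S} {I : TwoSidedIdeal R} {K : TwoSidedIdeal S} :
    I.map f ≤ K ↔ I ≤ K.comap f := by
  rw [map, span_le, Set.image_subset_iff]
  exact forall_congr' fun x => imp_congr_right fun _ => (mem_comap f).symm

lemma map_map (g : S →+* T) (f : R →+* S) (I : TwoSidedIdeal R) :
    (I.map f).map g = I.map (g.comp f) :=
  eq_of_forall_ge_iff fun K => by
    rw [map_le_iff_le_comap, map_le_iff_le_comap, map_le_iff_le_comap, comap_comap]

lemma map_comap_of_surjective {f : R →+* S} (hf : Function.Surjective f) (K : TwoSidedIdeal S) :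
    (K.comap f).map f = K := by
  refine le_antisymm (map_le_iff_le_comap.2 le_rfl) fun y hy => ?_
  obtain ⟨x, rfl⟩ := hf y
  exact mem_map_of_mem f ((mem_comap _).2 hy)

lemma map_ringEquiv (g : R ≃+* S) (I : TwoSidedIdeal R) :
    I.map (g : R →+* S) = g.mapTwoSidedIdeal I := by
  refine le_antisymm (map_le_iff_le_comap.2 fun x hx => ?_) fun y hy => ?_
  · simpa [RingEquiv.mapTwoSidedIdeal_apply, mem_comap] using hx
  · simpa using mem_map_of_mem (g : R →+* S) ((mem_comap _).1 hy)

lemma comap_top (f : R →+* S) : (⊤ : TwoSidedIdeal S).comap f = ⊤ :=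
  eq_top_iff.2 fun _ _ => (mem_comap _).2 trivial

lemma IsIdem.comap_ringEquiv (g : R ≃+* S) {K : TwoSidedIdeal S} (hK : K.IsIdem) :
    (K.comap g).IsIdem := by
  refine le_antisymm (span_le.2 ?_) fun x hx => ?_
  · rintro _ ⟨a, -, b, hb, rfl⟩
    exact mul_mem_left _ a b hb
  have hle : span {y : S | ∃ a ∈ K, ∃ b ∈ K, y = a * b} ≤
      (span {y : R | ∃ a ∈ K.comap g, ∃ b ∈ K.comap g, y = a * b}).comap g.symm := by
    refine span_le.2 ?_
    rintro _ ⟨a, ha, b, hb, rfl⟩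
    exact (mem_comap _).2 <| subset_span
      ⟨g.symm a, by simpa [mem_comap] using ha, g.symm b, by simpa [mem_comap] using hb, map_mul ..⟩
  have hgx : g x ∈ span {y : S | ∃ a ∈ K, ∃ b ∈ K, y = a * b} := by
    rw [hK]
    exact (mem_comap _).1 hx
  simpa using (mem_comap _).1 (hle hgx)

instance projective_comap_ringEquiv (g : R ≃+* S) (K : TwoSidedIdeal S)
    [Module.Projective Sᵐᵒᵖ K] : Module.Projective Rᵐᵒᵖ (K.comap g) :=
  have := RingHomInvPair.of_ringEquiv (RingEquiv.op g.symm)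
  have := RingHomInvPair.of_ringEquiv (RingEquiv.op g.symm).symm
  .of_equiv (M := K) (N := K.comap g) (σ := (RingEquiv.op g.symm : Sᵐᵒᵖ →+* Rᵐᵒᵖ))
    (σ' := ((RingEquiv.op g.symm).symm : Rᵐᵒᵖ →+* Sᵐᵒᵖ))
    { toFun := fun y => ⟨g.symm y, by simp [mem_comap]⟩
      invFun := fun x => ⟨g x, (mem_comap _).1 x.2⟩
      left_inv := fun y => by ext; simp
      right_inv := fun x => by ext; simp
      map_add' := fun y z => by ext; simp
      map_smul' := fun r y => by ext; exact map_mul g.symm _ _ }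

end TwoSidedIdeal

lemma RingEquiv.map_mem_jacobson_bot {S : Type*} [Ring S] (g : R ≃+* S) {j : R}
    (hj : j ∈ Ideal.jacobson (⊥ : Ideal R)) : g j ∈ Ideal.jacobson (⊥ : Ideal S) := by
  have hmap := Ideal.mem_map_of_mem (g : R →+* S) hj
  rwa [Ideal.map_jacobson_of_bijective (f := (g : R →+* S)) g.bijective, Ideal.map_bot] at hmap

namespace IsHeredityIdeal

open TwoSidedIdeal

variable {S : Type*} [Ring S]

lemma comap_ringEquiv (g : R ≃+* S) {K : TwoSidedIdeal S} (hK : IsHeredityIdeal K) :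
    IsHeredityIdeal (K.comap g) := by
  obtain ⟨hidem, _, hJ⟩ := hK
  refine ⟨hidem.comap_ringEquiv g, inferInstance, fun a ha j hj b hb => g.injective ?_⟩
  simpa using hJ _ ((mem_comap _).1 ha) _ (g.map_mem_jacobson_bot hj) _ ((mem_comap _).1 hb)

lemma comap_of_surjective {f : R →+* S} (hf : Function.Surjective f) {I K : TwoSidedIdeal S}
    (h : IsHeredityIdeal (I.map K.ringCon.mk')) :
    IsHeredityIdeal ((I.comap f).map (K.comap f).ringCon.mk') := by
  let φ : (K.comap f).ringCon.Quotient ≃+* K.ringCon.Quotient :=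
    K.ringCon.comapQuotientEquivOfSurj f hf rfl
  have hφ : (φ : (K.comap f).ringCon.Quotient →+* K.ringCon.Quotient).comp
      (K.comap f).ringCon.mk' = K.ringCon.mk'.comp f := rfl
  have key : (I.comap f).map (K.comap f).ringCon.mk' = (I.map K.ringCon.mk').comap φ := by
    rw [← RingEquiv.symm_symm φ, ← RingEquiv.mapTwoSidedIdeal_apply,
      ← RingEquiv.mapTwoSidedIdeal_symm, OrderIso.eq_symm_apply, ← map_ringEquiv, map_map, hφ,
      ← map_map, map_comap_of_surjective hf]
  rw [key]
  exact h.comap_ringEquiv φ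

end IsHeredityIdeal

theorem exists_heredity_chain_to_gen_general (e : R)
    (h : IsQuasiHereditary (TwoSidedIdeal.gen e).ringCon.Quotient) :
    ∃ (l : ℕ) (I : Fin (l + 1) → TwoSidedIdeal R),
      I 0 = ⊤ ∧ I (Fin.last l) = TwoSidedIdeal.gen e ∧ Antitone I ∧
      ∀ i : Fin l,
        IsHeredityIdeal (TwoSidedIdeal.map (I i.succ).ringCon.mk' (I i.castSucc)) := by
  obtain ⟨-, m, H, hH0, hHlast, hHanti, hHher⟩ := h
  let π := (TwoSidedIdeal.gen e).ringCon.mk'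
  refine ⟨m, fun i => (H i).comap π, ?_, ?_, (TwoSidedIdeal.comap π).monotone.comp_antitone hHanti,
    fun i => (hHher i).comap_of_surjective (RingCon.mk'_surjective _)⟩
  · simp only [hH0, TwoSidedIdeal.comap_top]
  · simp only [hHlast]
    exact TwoSidedIdeal.ker_ringCon_mk' _

/-- Let `R` be a semiprimary ring and `e` an idempotent of `R`. If the quotient ring
`R/ReR` is quasi-hereditary, then there is a finite chain of two-sided ideals from `R`
down to `ReR` whose successive subquotients are heredity ideals of the corresponding
quotient rings. -/
theorem exists_heredity_chain_to_gen (hR : IsSemiprimary R) (e : R)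
    (he : IsIdempotentElem e)
    (h : IsQuasiHereditary (TwoSidedIdeal.gen e).ringCon.Quotient) :
    ∃ (l : ℕ) (I : Fin (l + 1) → TwoSidedIdeal R),
      I 0 = ⊤ ∧ I (Fin.last l) = TwoSidedIdeal.gen e ∧ Antitone I ∧
      ∀ i : Fin l,
        IsHeredityIdeal (TwoSidedIdeal.map (I i.succ).ringCon.mk' (I i.castSucc)) :=
  exists_heredity_chain_to_gen_general e h
end

section
/- Let R be a semiprimary ring and I a two-sided ideal of R with I² = I. Then there exists an idempotent e ∈ R such that I = ReR. -/
/-! Basic definitions: semiprimary rings, heredity ideals, quasi-hereditary rings. -/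

variable {R : Type*} [Ring R]

/-! The image of `I` in the semisimple ring `R ⧸ J` is a left ideal generated by an idempotent.
Since `J` is nil, this idempotent lifts to an idempotent `e ∈ I`: if `x ∈ I` lifts it, then so
does `1 - (1 - xⁿ)ⁿ` for large `n`, which is idempotent and lies in `I` because it has no
constant term. Hence `I ⊆ ReR + J`, and idempotence gives `I = I² ⊆ (ReR + J) I ⊆ ReR + J I`.
Iterating, `I ⊆ ReR + Jⁿ I`, which is `ReR` once `Jⁿ = 0`. -/

theorem Ideal.one_sub_one_sub_pow_mem {L : Ideal R} {y : R} (hy : y ∈ L) (n : ℕ) :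
    1 - (1 - y) ^ n ∈ L := by
  induction n with
  | zero => simp
  | succ n ih =>
    have : 1 - (1 - y) ^ (n + 1) = (1 - y) * (1 - (1 - y) ^ n) + y := by
      rw [pow_succ']
      generalize (1 - y) ^ n = P
      noncomm_ring
    rw [this]
    exact add_mem (L.mul_mem_left _ ih) hy

theorem exists_isIdempotentElem_mem_of_ker_isNilpotent {S : Type*} [Ring S] (f : R →+* S)
    (h : ∀ x ∈ RingHom.ker f, IsNilpotent x) {L : Ideal R} {x : R} (hx : x ∈ L)
    (hfx : IsIdempotentElem (f x)) : ∃ e ∈ L, IsIdempotentElem e ∧ f e = f x := by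
  have hker : x - x ^ 2 ∈ RingHom.ker f := by
    simp [RingHom.mem_ker, pow_two, hfx.eq]
  obtain ⟨n, hn⟩ := h _ hker
  have hn' : (x - x ^ 2) ^ (n + 1) = 0 := by rw [pow_succ, hn, zero_mul]
  refine ⟨1 - (1 - x ^ (n + 1)) ^ (n + 1), ?_,
    isIdempotentElem_one_sub_one_sub_pow_pow _ _ hn', ?_⟩
  · exact Ideal.one_sub_one_sub_pow_mem (L.pow_mem_of_mem hx _ n.succ_pos) _
  · simp only [map_sub, map_one, map_pow, hfx.pow_succ_eq, hfx.one_sub.pow_succ_eq,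
      sub_sub_cancel]

theorem exists_isIdempotentElem_mem_le_span_sup_ker {S : Type*} [Ring S] [IsSemisimpleRing S]
    (f : R →+* S) (hf : Function.Surjective f) (h : ∀ x ∈ RingHom.ker f, IsNilpotent x)
    (L : Ideal R) : ∃ e ∈ L, IsIdempotentElem e ∧ L ≤ Ideal.span {e} ⊔ RingHom.ker f := by
  obtain ⟨e₀, he₀, hL⟩ := IsSemisimpleRing.ideal_eq_span_idempotent (L.map f)
  obtain ⟨x, hx, rfl⟩ := (Ideal.mem_map_iff_of_surjective f hf).mp
    (hL ▸ Ideal.mem_span_singleton_self e₀)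
  obtain ⟨e, heL, he, hfe⟩ := exists_isIdempotentElem_mem_of_ker_isNilpotent f h hx he₀
  refine ⟨e, heL, he, fun a ha ↦ ?_⟩
  obtain ⟨r, hr⟩ := Ideal.mem_span_singleton'.mp (hL ▸ Ideal.mem_map_of_mem f ha)
  obtain ⟨s, rfl⟩ := hf r
  refine Submodule.mem_sup.mpr ⟨s * e, Ideal.mul_mem_left _ _ (Ideal.mem_span_singleton_self e),
    a - s * e, ?_, add_sub_cancel _ _⟩
  rw [RingHom.mem_ker, map_sub, map_mul, hfe, hr, sub_self]

theorem Ideal.le_of_le_sup_mul_of_isNilpotent {A G J : Ideal R} (hJ : IsNilpotent J)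
    (h : A ≤ G ⊔ J * A) : A ≤ G := by
  have key : ∀ n : ℕ, A ≤ G ⊔ J ^ n * A := by
    intro n
    induction n with
    | zero => simp [Submodule.pow_zero, Ideal.one_eq_top]
    | succ n ih =>
      calc A ≤ G ⊔ J ^ n * A := ih
        _ ≤ G ⊔ J ^ n * (G ⊔ J * A) := sup_le_sup_left (Ideal.mul_mono_right h) _
        _ = G ⊔ J ^ n * G ⊔ J ^ (n + 1) * A := by
          rw [Ideal.mul_sup, Submodule.pow_succ, mul_assoc, sup_assoc]
        _ = G ⊔ J ^ (n + 1) * A := by rw [Ideal.sup_mul_left_self]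
  obtain ⟨n, hn⟩ := hJ
  simpa [hn] using key n

theorem Ideal.le_of_le_sup_of_le_mul_self {A G J : Ideal R} [G.IsTwoSided] (hJ : IsNilpotent J)
    (hA : A ≤ A * A) (h : A ≤ G ⊔ J) : A ≤ G := by
  refine le_of_le_sup_mul_of_isNilpotent hJ ?_
  calc A ≤ A * A := hA
    _ ≤ (G ⊔ J) * A := Ideal.mul_mono_left h
    _ = G * A ⊔ J * A := Ideal.sup_mul _ _ _
    _ ≤ G ⊔ J * A := sup_le_sup_right Ideal.mul_le_left _

theorem TwoSidedIdeal.asIdeal_pow_eq_bot {J : TwoSidedIdeal R} {n : ℕ}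
    (hJ : ∀ x : Fin n → R, (∀ i, x i ∈ J) → (List.ofFn x).prod = 0) : J.asIdeal ^ n = ⊥ := by
  have key : ∀ m l, m + l = n → ∀ x : Fin l → R, (∀ i, x i ∈ J) →
      ∀ y ∈ J.asIdeal ^ m, y * (List.ofFn x).prod = 0 := by
    intro m
    induction m with
    | zero =>
      rintro l hl x hx y -
      rw [zero_add] at hl
      subst hl
      rw [hJ x hx, mul_zero]
    | succ m ih =>
      intro l hl x hx y hy
      rw [Submodule.pow_succ] at hy
      refine Submodule.mul_induction_on hy (fun a ha j hj ↦ ?_) fun a b ha hb ↦ ?_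
      · have hjx : ∀ i, (Fin.cons j x : Fin (l + 1) → R) i ∈ J :=
          Fin.cases (mem_asIdeal.mp hj) hx
        simpa [mul_assoc] using ih (l + 1) (by omega) _ hjx a ha
      · rw [add_mul, ha, hb, add_zero]
  rw [eq_bot_iff]
  intro y hy
  simpa using key n 0 rfl Fin.elim0 (fun i ↦ i.elim0) y hy

theorem TwoSidedIdeal.IsIdem.asIdeal_le_mul_self {I : TwoSidedIdeal R} (hI : I.IsIdem) :
    I.asIdeal ≤ I.asIdeal * I.asIdeal := by
  have hspan : I ≤ (I.asIdeal * I.asIdeal).toTwoSided := by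
    refine hI.ge.trans (TwoSidedIdeal.span_le.mpr ?_)
    rintro _ ⟨a, ha, b, hb, rfl⟩
    exact Ideal.mem_toTwoSided.mpr
      (Submodule.mul_mem_mul (mem_asIdeal.mpr ha) (mem_asIdeal.mpr hb))
  simpa using TwoSidedIdeal.asIdeal.monotone hspan

/-- In a semiprimary ring, every idempotent two-sided ideal is generated by an idempotent
element. -/
theorem exists_idempotent_gen_of_isIdem (hR : IsSemiprimary R) (I : TwoSidedIdeal R)
    (hI : I.IsIdem) :
    ∃ e : R, IsIdempotentElem e ∧ I = TwoSidedIdeal.gen e := by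
  obtain ⟨J, -, ⟨k, hJ⟩, _⟩ := hR
  have hnil : J.asIdeal ^ (k + 1) = ⊥ := J.asIdeal_pow_eq_bot hJ
  have hker : RingHom.ker J.ringCon.mk' = J.asIdeal := by
    ext x
    rw [RingHom.mem_ker, ← TwoSidedIdeal.mem_ker, TwoSidedIdeal.ker_ringCon_mk',
      TwoSidedIdeal.mem_asIdeal]
  have hker_nil : ∀ x ∈ RingHom.ker J.ringCon.mk', IsNilpotent x := by
    rw [hker]
    exact fun x hx ↦ ⟨k + 1, by simpa [hnil] using Submodule.pow_mem_pow _ hx (k + 1)⟩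
  obtain ⟨e, heI, he, hle⟩ := exists_isIdempotentElem_mem_le_span_sup_ker J.ringCon.mk'
    J.ringCon.mk'_surjective hker_nil I.asIdeal
  have hspan : Ideal.span {e} ≤ (TwoSidedIdeal.gen e).asIdeal :=
    Ideal.span_le.mpr TwoSidedIdeal.subset_span
  have hIe : I.asIdeal ≤ (TwoSidedIdeal.gen e).asIdeal :=
    Ideal.le_of_le_sup_of_le_mul_self ⟨k + 1, hnil⟩ hI.asIdeal_le_mul_self
      (hle.trans (sup_le_sup hspan hker.le))
  exact ⟨e, he, le_antisymm (TwoSidedIdeal.orderIsoIsTwoSided.le_iff_le.mp hIe)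
    (TwoSidedIdeal.span_le.mpr (by simpa using heI))⟩
end

section
/- If R is a semiprimary ring and n is a positive integer, then the ring T_n(R) of n × n upper triangular matrices with entries in R is semiprimary. -/
/-!
Taking diagonals is a surjective ring homomorphism `T_n(R) → Rⁿ` whose kernel, the strictly
upper triangular matrices, has vanishing `n`-fold products. The kernel of a surjection with
nilpotent kernel lies in the Jacobson radical, so the radical is the preimage of the radical and
the quotients by the radicals agree; nilpotency of the radical lifts as well. Hence semiprimarity
lifts from `Rⁿ`, a finite product of semiprimary rings.
-/

variable {R : Type*} [Ring R]

/-- The subring of `n × n` upper triangular matrices over `R`. -/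
def upperTriangular (n : ℕ) (R : Type*) [Ring R] :
    Subring (Matrix (Fin n) (Fin n) R) where
  carrier := {x | ∀ i j : Fin n, j < i → x i j = 0}
  zero_mem' := fun i j _ => rfl
  one_mem' := fun i j h => Matrix.one_apply_ne h.ne'
  add_mem' {x y} hx hy := fun i j h => by
    simp [Matrix.add_apply, hx i j h, hy i j h]
  neg_mem' {x} hx := fun i j h => by simp [Matrix.neg_apply, hx i j h]
  mul_mem' {x y} hx hy := fun i j h => by
    simp only [Matrix.mul_apply]
    refine Finset.sum_eq_zero fun k _ => ?_
    rcases lt_or_ge j k with hk | hk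
    · rw [hy k j hk, mul_zero]
    · rw [hx i k (lt_of_le_of_lt hk h), zero_mul]

def ProdsVanish {M : Type*} [Monoid M] [Zero M] (S : Set M) (m : ℕ) : Prop :=
  ∀ x : Fin m → M, (∀ i, x i ∈ S) → (List.ofFn x).prod = 0

namespace ProdsVanish

variable {M : Type*} [MonoidWithZero M] {S T : Set M} {m l : ℕ}

theorem mono (h : ProdsVanish S m) {k : ℕ} (hmk : m ≤ k) : ProdsVanish S k := by
  obtain ⟨r, rfl⟩ := Nat.exists_eq_add_of_le hmk
  intro x hx
  rw [List.ofFn_add, List.prod_append, h _ fun i => hx _, zero_mul]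

theorem mul (hST : ∀ x : Fin m → M, (∀ i, x i ∈ S) → (List.ofFn x).prod ∈ T)
    (hT : ProdsVanish T l) : ProdsVanish S (l * m) := by
  intro x hx
  rw [List.ofFn_mul, List.prod_flatten, List.map_ofFn]
  exact hT _ fun i => hST _ fun j => hx _

theorem pow_eq_zero (h : ProdsVanish S m) {a : M} (ha : a ∈ S) : a ^ m = 0 := by
  simpa [List.ofFn_const, List.prod_replicate] using h (fun _ => a) fun _ => ha

end ProdsVanish

theorem Ideal.mem_jacobson_bot_of_isNilpotent_mul {A : Type*} [Ring A] {x : A}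
    (h : ∀ y, IsNilpotent (y * x)) : x ∈ Ideal.jacobson (⊥ : Ideal A) := by
  refine Ideal.mem_jacobson_iff.2 fun y => ?_
  obtain ⟨u, hu⟩ := (h y).isUnit_one_add
  refine ⟨↑u⁻¹, ?_⟩
  rw [Ideal.mem_bot, mul_assoc, sub_eq_zero, add_comm, ← mul_one_add, ← hu, Units.inv_mul]

theorem Ideal.mem_jacobson_bot_pi {ι : Type*} {A : ι → Type*} [∀ i, Ring (A i)]
    {x : Π i, A i} : x ∈ Ideal.jacobson (⊥ : Ideal (Π i, A i)) ↔
      ∀ i, x i ∈ Ideal.jacobson (⊥ : Ideal (A i)) := by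
  classical
  simp only [Ideal.mem_jacobson_iff, Ideal.mem_bot]
  constructor
  · intro h i y
    obtain ⟨z, hz⟩ := h (Pi.single i y)
    exact ⟨z i, by simpa using congrFun hz i⟩
  · intro h y
    choose z hz using fun i => h i (y i)
    exact ⟨z, funext hz⟩

theorem IsSemiprimary.of_surjective_of_prodsVanish_ker {A B : Type*} [Ring A] [Ring B]
    (hB : IsSemiprimary B) (f : A →+* B) (hf : Function.Surjective f) {l : ℕ}
    (hker : ProdsVanish (RingHom.ker f : Set A) l) : IsSemiprimary A := by
  obtain ⟨J, hJ, ⟨k, hk⟩, hss⟩ := hB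
  have hker_le : RingHom.ker f ≤ Ideal.jacobson ⊥ := fun x hx =>
    Ideal.mem_jacobson_bot_of_isNilpotent_mul fun y =>
      ⟨l, hker.pow_eq_zero (Ideal.mul_mem_left _ y hx)⟩
  have hjac : Ideal.comap f (Ideal.jacobson ⊥) = Ideal.jacobson ⊥ := by
    rw [Ideal.comap_jacobson_of_surjective hf, ← RingHom.ker_eq_comap_bot]
    refine le_antisymm ?_ (Ideal.jacobson_mono bot_le)
    simpa only [Ideal.jacobson_idem] using Ideal.jacobson_mono hker_le
  refine ⟨J.comap f, ?_, ⟨l * (k + 1), (ProdsVanish.mul ?_ hker).mono (Nat.le_succ _)⟩, ?_⟩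
  · ext x
    rw [← hjac, SetLike.mem_coe, TwoSidedIdeal.mem_comap f, ← SetLike.mem_coe, hJ]
    rfl
  · intro x hx
    rw [SetLike.mem_coe, RingHom.mem_ker, map_list_prod, List.map_ofFn]
    exact hk _ fun i => (TwoSidedIdeal.mem_comap f).1 (hx i)
  · exact (RingCon.comapQuotientEquivOfSurj J.ringCon f hf rfl).symm.isSemisimpleRing

theorem IsSemiprimary.pi {ι : Type*} [Finite ι] {A : ι → Type*} [∀ i, Ring (A i)]
    (h : ∀ i, IsSemiprimary (A i)) : IsSemiprimary (Π i, A i) := by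
  choose J hJ hk hss using h
  choose k hk using hk
  obtain ⟨K, hK⟩ := Finite.exists_le k
  let φ : (Π i, A i) →+* Π i, (J i).ringCon.Quotient :=
    RingHom.pi fun i => (J i).ringCon.mk'.comp (Pi.evalRingHom A i)
  have hφ : Function.Surjective φ := fun q => by
    choose x hx using fun i => (J i).ringCon.mk'_surjective (q i)
    exact ⟨x, funext hx⟩
  have mem_ker : ∀ x, x ∈ TwoSidedIdeal.ofRingCon (RingCon.ker φ) ↔ ∀ i, x i ∈ J i := by
    intro x
    simp only [TwoSidedIdeal.mem_iff, RingCon.ker_apply, funext_iff]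
    exact forall_congr' fun i => RingCon.eq _
  refine ⟨.ofRingCon (RingCon.ker φ), ?_, ⟨K, fun x hx => ?_⟩, ?_⟩
  · ext x
    simp only [SetLike.mem_coe, mem_ker, Ideal.mem_jacobson_bot_pi]
    exact forall_congr' fun i => Set.ext_iff.1 (hJ i) (x i)
  · funext i
    rw [Pi.list_prod_apply, List.map_ofFn]
    exact ProdsVanish.mono (hk i) (Nat.succ_le_succ (hK i)) _ fun t => (mem_ker _).1 (hx t) i
  · exact (RingCon.quotientKerEquivOfSurjective φ hφ).symm.isSemisimpleRing

theorem Matrix.IsUpperTriangular.mul_apply_self {m α : Type*} [LinearOrder m] [Fintype m]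
    [NonUnitalNonAssocSemiring α] {x y : Matrix m m α} (hx : x.IsUpperTriangular)
    (hy : y.IsUpperTriangular) (i : m) : (x * y) i i = x i i * y i i := by
  rw [Matrix.mul_apply, Finset.sum_eq_single i]
  · intro k _ hk
    rcases hk.lt_or_gt with h | h
    · rw [hx h, zero_mul]
    · rw [hy h, mul_zero]
  · exact fun h => absurd (Finset.mem_univ i) h

theorem Matrix.prod_ofFn_apply_eq_zero_of_strictUpper {α : Type*} [Semiring α] {n m : ℕ}
    {x : Fin m → Matrix (Fin n) (Fin n) α} (hx : ∀ t i j, j ≤ i → x t i j = 0)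
    {i j : Fin n} (hij : (j : ℕ) < i + m) : (List.ofFn x).prod i j = 0 := by
  induction m generalizing i with
  | zero => exact Matrix.one_apply_ne (by rintro rfl; omega)
  | succ m ih =>
    rw [List.ofFn_succ, List.prod_cons, Matrix.mul_apply]
    refine Finset.sum_eq_zero fun k _ => ?_
    rcases le_or_gt k i with hki | hik
    · rw [hx 0 i k hki, zero_mul]
    · rw [ih (fun t => hx t.succ) (by omega), mul_zero]

theorem mem_upperTriangular_iff {n : ℕ} {x : Matrix (Fin n) (Fin n) R} :
    x ∈ upperTriangular n R ↔ x.IsUpperTriangular :=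
  ⟨fun h _ _ => h _ _, fun h _ _ => @h _ _⟩

namespace upperTriangular

variable {n : ℕ}

def diag : upperTriangular n R →+* (Fin n → R) where
  toFun x i := (x : Matrix (Fin n) (Fin n) R) i i
  map_one' := funext Matrix.one_apply_eq
  map_mul' x y := funext <|
    (mem_upperTriangular_iff.1 x.2).mul_apply_self (mem_upperTriangular_iff.1 y.2)
  map_zero' := rfl
  map_add' _ _ := rfl

theorem diag_surjective : Function.Surjective (diag : upperTriangular n R →+* _) := fun d =>
  ⟨⟨Matrix.diagonal d, mem_upperTriangular_iff.2 (Matrix.blockTriangular_diagonal d)⟩,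
    funext (Matrix.diagonal_apply_eq d)⟩

theorem prodsVanish_ker_diag :
    ProdsVanish (RingHom.ker (diag : upperTriangular n R →+* _) : Set (upperTriangular n R))
      n := by
  intro x hx
  apply Subtype.ext
  rw [SubmonoidClass.coe_list_prod, List.map_ofFn]
  ext i j
  refine Matrix.prod_ofFn_apply_eq_zero_of_strictUpper (fun t i j hji => ?_) (by omega)
  rcases hji.lt_or_eq with h | rfl
  · exact (x t).2 i j h
  · exact congrFun (RingHom.mem_ker.1 (hx t)) j

end upperTriangular

theorem upperTriangular_isSemiprimary_general (hR : IsSemiprimary R) (n : ℕ) :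
    IsSemiprimary (upperTriangular n R) :=
  (IsSemiprimary.pi fun _ : Fin n => hR).of_surjective_of_prodsVanish_ker upperTriangular.diag
    upperTriangular.diag_surjective upperTriangular.prodsVanish_ker_diag

/-- If `R` is a semiprimary ring, then the ring of `n × n` upper triangular matrices over
`R` is semiprimary. -/
theorem upperTriangular_isSemiprimary (hR : IsSemiprimary R) (n : ℕ) (hn : 0 < n) :
    IsSemiprimary (upperTriangular n R) :=
  upperTriangular_isSemiprimary_general hR n
end

section
/- Let R be a semiprimary ring and H a heredity ideal of R. Then H is projective both as a right R-module and as a left R-module. (In particular, the smallest nonzero term H_{m−1} of any heredity chain of a quasi-hereditary ring R is projective on both sides.) -/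
/-! Basic definitions: semiprimary rings, heredity ideals, quasi-hereditary rings. -/

variable {R : Type*} [Ring R]

/-!
Lifting an idempotent of the semisimple ring `R/J` gives `e ∈ H` with `H ⊆ ReR + J`; as `H` is
idempotent and `J` nilpotent, `H = ReR`. Since `eJe ⊆ HJH = 0`, the corner ring `eRe` embeds into
`R/J` as a corner, hence is semisimple, so `eR` is a projective left `eRe`-module. Right
projectivity of `H` along its generators `Re` gives `h = ∑ᵢ xᵢ σᵢ(h)` with `xᵢ ∈ Re` and `σᵢ` right
linear, and an `eRe`-dual basis `(φₖ, yₖ)` of `eR` turns this into the left dual basis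
`h ↦ ∑ᵢ xᵢ φₖ(e σᵢ(h))`, `yₖ` of `H`. Its left linearity is checked on the generators `a e b`,
where it equals `a φₖ(e b)`.
-/

namespace IsIdempotentElem

variable {e : R} (he : IsIdempotentElem e)

@[simp] lemma Corner.val_zero : (0 : he.Corner).1 = 0 := rfl
@[simp] lemma Corner.val_add (x y : he.Corner) : (x + y).1 = x.1 + y.1 := rfl
@[simp] lemma Corner.val_mul (x y : he.Corner) : (x * y).1 = x.1 * y.1 := rfl

lemma mul_corner_val (x : he.Corner) : e * x.1 = x.1 :=
  ((Subsemigroup.mem_corner_iff he).mp x.2).1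

lemma corner_val_mul (x : he.Corner) : x.1 * e = x.1 :=
  ((Subsemigroup.mem_corner_iff he).mp x.2).2

def toCorner (r : R) : he.Corner := ⟨e * r * e, r, rfl⟩

@[simp] lemma toCorner_val (r : R) : (he.toCorner r).1 = e * r * e := rfl

def cornerVal : he.Corner →+ R where
  toFun := Subtype.val
  map_zero' := rfl
  map_add' _ _ := rfl

@[simp] lemma cornerVal_apply (x : he.Corner) : he.cornerVal x = x.1 := rfl

theorem isSemisimpleRing_corner {S : Type*} [Ring S] [IsSemisimpleRing S] {ε : S}
    (hε : IsIdempotentElem ε) : IsSemisimpleRing hε.Corner := by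
  refine { exists_isCompl := fun L => ?_ }
  let SL := Submodule.span S (Subtype.val '' (L : Set hε.Corner))
  obtain ⟨W, hW⟩ := exists_isCompl SL
  have corner_mem : ∀ x ∈ SL, ∀ s : S, ∃ l ∈ L, l.1 = ε * s * x := by
    intro x hx
    induction hx using Submodule.span_induction with
    | mem x hx =>
      obtain ⟨l, hl, rfl⟩ := hx
      exact fun s => ⟨hε.toCorner s * (show hε.Corner from l), L.smul_mem _ hl,
        show ε * s * ε * l.1 = _ by rw [mul_assoc _ ε, hε.mul_corner_val l]⟩
    | zero => exact fun _ => ⟨0, L.zero_mem, by simp⟩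
    | add x y _ _ hx hy =>
      intro s
      obtain ⟨l, hl, hlx⟩ := hx s
      obtain ⟨l', hl', hly⟩ := hy s
      exact ⟨l + l', L.add_mem hl hl', by simp [hlx, hly, mul_add]⟩
    | smul t x _ hx =>
      intro s
      obtain ⟨l, hl, hlx⟩ := hx (s * t)
      exact ⟨l, hl, by simp [hlx, mul_assoc]⟩
  -- With `q` the projection of `S` onto `SL`, `b ↦ ε * q b` is an `εSε`-linear retraction onto `L`.
  choose P hPL hP using fun b : hε.Corner =>
    corner_mem (SL.projection W hW b.1) (SL.projection_apply_mem hW _) 1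
  simp only [mul_one] at hP
  let Pl : hε.Corner →ₗ[hε.Corner] L :=
    { toFun := fun b => ⟨P b, hPL b⟩
      map_add' := fun b c => Subtype.ext <| Subtype.ext <| by simp [hP, mul_add]
      map_smul' := fun c b => Subtype.ext <| Subtype.ext <| by
        show (P (c * b)).1 = c.1 * (P b).1
        rw [hP, hP, Corner.val_mul, ← smul_eq_mul c.1 b.1, map_smul, smul_eq_mul, ← mul_assoc,
          ← mul_assoc, hε.mul_corner_val, hε.corner_val_mul] }
  refine ⟨LinearMap.ker Pl, LinearMap.isCompl_of_proj fun l => Subtype.ext <| Subtype.ext ?_⟩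
  show (P l).1 = l.1.1
  rw [hP, SL.projection_apply_of_mem_left hW (Submodule.subset_span ⟨l.1, l.2, rfl⟩),
    hε.mul_corner_val]

theorem isSemisimpleRing_corner_of_surjective {S : Type*} [Ring S] [IsSemisimpleRing S]
    (f : R →+* S) (hf : Function.Surjective f) (hker : ∀ x : he.Corner, f x.1 = 0 → x = 0) :
    IsSemisimpleRing he.Corner := by
  let φ : he.Corner →+* (he.map f).Corner :=
    { toFun := fun x => ⟨f x.1, (Subsemigroup.mem_corner_iff (he.map f)).mpr
        ⟨by rw [← map_mul, he.mul_corner_val], by rw [← map_mul, he.corner_val_mul]⟩⟩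
      map_one' := rfl
      map_mul' := fun x y => Subtype.ext (map_mul f x.1 y.1)
      map_zero' := Subtype.ext (map_zero f)
      map_add' := fun x y => Subtype.ext (map_add f x.1 y.1) }
  have hφ : Function.Bijective φ := by
    refine ⟨(injective_iff_map_eq_zero φ).mpr fun x hx => hker x (congrArg Subtype.val hx), ?_⟩
    rintro ⟨_, s, rfl⟩
    obtain ⟨r, rfl⟩ := hf s
    exact ⟨he.toCorner r, Subtype.ext (show f (e * r * e) = _ by rw [map_mul, map_mul])⟩
  exact (RingEquiv.ofBijective φ hφ).isSemisimpleRing_iff.mpr (isSemisimpleRing_corner _)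

def CornerModule (_ : IsIdempotentElem e) : Type _ := (AddMonoidHom.mulLeft e).range

instance : AddCommGroup he.CornerModule :=
  inferInstanceAs (AddCommGroup (AddMonoidHom.mulLeft e).range)

lemma mul_cornerModule_val (x : he.CornerModule) : e * x.1 = x.1 := by
  obtain ⟨y, hy⟩ := x.2
  rw [← hy, AddMonoidHom.coe_mulLeft, he.mul_self_mul]

instance : Module he.Corner he.CornerModule where
  smul c x := ⟨c.1 * x.1, c.1 * x.1, by
    rw [AddMonoidHom.coe_mulLeft, ← mul_assoc, he.mul_corner_val]⟩
  one_smul x := Subtype.ext (he.mul_cornerModule_val x)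
  mul_smul c d x := Subtype.ext (mul_assoc c.1 d.1 x.1)
  smul_zero c := Subtype.ext (mul_zero c.1)
  smul_add c x y := Subtype.ext (mul_add c.1 x.1 y.1)
  add_smul c d x := Subtype.ext (add_mul c.1 d.1 x.1)
  zero_smul x := Subtype.ext (zero_mul x.1)

@[simp] lemma CornerModule.val_smul (c : he.Corner) (x : he.CornerModule) :
    (c • x).1 = c.1 * x.1 := rfl

@[simp] lemma CornerModule.val_add (x y : he.CornerModule) : (x + y).1 = x.1 + y.1 := rfl

def toCornerModule : R →+ he.CornerModule := (AddMonoidHom.mulLeft e).rangeRestrict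

@[simp] lemma toCornerModule_val (y : R) : (he.toCornerModule y).1 = e * y := rfl

end IsIdempotentElem

namespace TwoSidedIdeal

lemma mul_mem_span_singleton (e a b : R) : a * e * b ∈ span ({e} : Set R) :=
  mul_mem_right _ _ _ (mul_mem_left _ _ _ (subset_span rfl))

theorem span_singleton_induction {e : R} {p : span ({e} : Set R) → Prop}
    (mul : ∀ a b : R, p ⟨a * e * b, mul_mem_span_singleton e a b⟩)
    (add : ∀ x y, p x → p y → p (x + y)) (x : span ({e} : Set R)) : p x := by
  obtain ⟨x, hx⟩ := x
  induction mem_span_iff_mem_addSubgroup_closure.mp hx using AddSubgroup.closure_induction'' with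
  | mem z hz =>
    obtain ⟨_, ⟨a, -, _, rfl, rfl⟩, b, -, rfl⟩ := hz
    exact mul a b
  | neg_mem z hz =>
    obtain ⟨_, ⟨a, -, _, rfl, rfl⟩, b, -, rfl⟩ := hz
    simpa only [neg_mul] using mul (-a) b
  | zero => simpa only [zero_mul] using mul 0 0
  | add y z hy hz py pz =>
    exact add ⟨y, mem_span_iff_mem_addSubgroup_closure.mpr hy⟩
      ⟨z, mem_span_iff_mem_addSubgroup_closure.mpr hz⟩ (py _) (pz _)

noncomputable def spanSingletonGens (e : R) : (R →₀ Rᵐᵒᵖ) →ₗ[Rᵐᵒᵖ] span ({e} : Set R) :=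
  Finsupp.linearCombination Rᵐᵒᵖ fun a => ⟨a * e, mul_mem_left _ _ _ (subset_span rfl)⟩

lemma spanSingletonGens_single (e a : R) (β : Rᵐᵒᵖ) : spanSingletonGens e (Finsupp.single a β) =
    ⟨a * e * β.unop, mul_mem_span_singleton e a β.unop⟩ := by
  rw [spanSingletonGens, Finsupp.linearCombination_single]
  rfl

lemma spanSingletonGens_surjective (e : R) : Function.Surjective (spanSingletonGens e) := by
  refine span_singleton_induction (fun a b => ⟨_, spanSingletonGens_single e a (.op b)⟩) ?_
  rintro x y ⟨c, rfl⟩ ⟨d, rfl⟩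
  exact ⟨c + d, map_add _ c d⟩

end TwoSidedIdeal

namespace IsIdempotentElem

open TwoSidedIdeal

variable {e : R} (he : IsIdempotentElem e)

noncomputable def cornerModuleCombination : (he.CornerModule →₀ R) →ₗ[R] span ({e} : Set R) :=
  Finsupp.linearCombination R fun m =>
    ⟨m.1, he.mul_cornerModule_val m ▸ mul_mem_right _ _ _ (subset_span rfl)⟩

lemma cornerModuleCombination_mapRange (f : he.CornerModule →₀ he.Corner) :
    (he.cornerModuleCombination (Finsupp.mapRange.addMonoidHom he.cornerVal f)).1 =
      (Finsupp.linearCombination he.Corner id f).1 := by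
  induction f using Finsupp.induction_linear with
  | zero => simp only [map_zero]; rfl
  | add f f' hf hf' => simp only [map_add, AddMemClass.coe_add, hf, hf', CornerModule.val_add]
  | single m κ => simp [cornerModuleCombination]

lemma exists_cornerModule_lift [Module.Projective he.Corner he.CornerModule] :
    ∃ lift : he.CornerModule →+ (he.CornerModule →₀ R),
      (∀ (κ : he.Corner) m, lift (κ • m) = κ.1 • lift m) ∧
      ∀ m, (he.cornerModuleCombination (lift m)).1 = m.1 := by
  obtain ⟨s, hs⟩ := Module.projective_def'.mp ‹Module.Projective he.Corner he.CornerModule›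
  refine ⟨(Finsupp.mapRange.addMonoidHom he.cornerVal).comp s.toAddMonoidHom,
    fun κ m => ?_, fun m => ?_⟩
  · ext x
    simp
  · simp only [AddMonoidHom.comp_apply, LinearMap.toAddMonoidHom_coe,
      cornerModuleCombination_mapRange, ← LinearMap.comp_apply _ s, hs, LinearMap.id_apply]

/-- `∑ a • op βₐ ↦ ∑ a • lift (e βₐ)`; precomposed with a right section of `spanSingletonGens e`
it becomes a left section of `cornerModuleCombination`. -/
noncomputable def cornerGlue (lift : he.CornerModule →+ (he.CornerModule →₀ R)) :
    (R →₀ Rᵐᵒᵖ) →+ (he.CornerModule →₀ R) :=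
  Finsupp.liftAddHom fun a => (DistribSMul.toAddMonoidHom _ a).comp
    (lift.comp (he.toCornerModule.comp MulOpposite.opAddEquiv.symm.toAddMonoidHom))

variable {he}
variable {lift : he.CornerModule →+ (he.CornerModule →₀ R)}

lemma cornerGlue_single (a : R) (β : Rᵐᵒᵖ) :
    he.cornerGlue lift (Finsupp.single a β) = a • lift (he.toCornerModule β.unop) :=
  Finsupp.liftAddHom_apply_single _ _ _

lemma cornerGlue_op_smul (hlift : ∀ (κ : he.Corner) m, lift (κ • m) = κ.1 • lift m)
    (b : R) (c : R →₀ Rᵐᵒᵖ) :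
    he.cornerGlue lift (MulOpposite.op b • MulOpposite.op e • c) =
      ((spanSingletonGens e c).1 * e) • lift (he.toCornerModule b) := by
  induction c using Finsupp.induction_linear with
  | zero => simp
  | add c d hc hd => simp only [smul_add, map_add, hc, hd, AddMemClass.coe_add, add_mul, add_smul]
  | single a γ =>
    have hγ : he.toCornerModule (MulOpposite.op b • MulOpposite.op e • γ).unop =
        he.toCorner γ.unop • he.toCornerModule b :=
      Subtype.ext <| by simp [mul_assoc, he.mul_self_mul]
    rw [Finsupp.smul_single, Finsupp.smul_single, cornerGlue_single, hγ, hlift, smul_smul,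
      spanSingletonGens_single]
    congr 1
    show a * (e * γ.unop * e) = _
    simp only [mul_assoc]

lemma cornerModuleCombination_cornerGlue
    (hlift : ∀ m, (he.cornerModuleCombination (lift m)).1 = m.1) (c : R →₀ Rᵐᵒᵖ) :
    he.cornerModuleCombination (he.cornerGlue lift c) = spanSingletonGens e c := by
  induction c using Finsupp.induction_linear with
  | zero => simp
  | add c d hc hd => rw [map_add, map_add, hc, hd, map_add]
  | single a β =>
    rw [cornerGlue_single, map_smul, spanSingletonGens_single]
    refine Subtype.ext ?_
    show a * (he.cornerModuleCombination _).1 = _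
    rw [hlift, toCornerModule_val]
    exact (mul_assoc ..).symm

end IsIdempotentElem

namespace TwoSidedIdeal

theorem projective_span_singleton {e : R} (he : IsIdempotentElem e)
    [Module.Projective Rᵐᵒᵖ (span ({e} : Set R))]
    [Module.Projective he.Corner he.CornerModule] : Module.Projective R (span ({e} : Set R)) := by
  obtain ⟨σ, hσ⟩ := Module.projective_lifting_property (spanSingletonGens e) LinearMap.id
    (spanSingletonGens_surjective e)
  have gens_σ (x : span ({e} : Set R)) : spanSingletonGens e (σ x) = x :=
    LinearMap.congr_fun hσ x
  obtain ⟨lift, lift_smul, combination_lift⟩ := he.exists_cornerModule_lift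
  let t : span ({e} : Set R) →+ (he.CornerModule →₀ R) :=
    (he.cornerGlue lift).comp σ.toAddMonoidHom
  have t_gen (a b : R) : t ⟨a * e * b, mul_mem_span_singleton e a b⟩ =
      (a * e) • lift (he.toCornerModule b) := by
    have hae : (⟨a * e * b, mul_mem_span_singleton e a b⟩ : span ({e} : Set R)) =
        MulOpposite.op b • MulOpposite.op e • ⟨a * e, mul_mem_left _ _ _ (subset_span rfl)⟩ :=
      Subtype.ext (show a * e * b = a * e * e * b by rw [he.mul_mul_self])
    show he.cornerGlue lift (σ _) = _
    rw [hae, σ.map_smul, σ.map_smul, IsIdempotentElem.cornerGlue_op_smul lift_smul, gens_σ]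
    exact congrArg (· • _) (he.mul_mul_self a)
  have t_smul (r : R) (x : span ({e} : Set R)) : t (r • x) = r • t x := by
    induction x using span_singleton_induction with
    | mul a b =>
      have hr : r • (⟨a * e * b, mul_mem_span_singleton e a b⟩ : span ({e} : Set R)) =
          ⟨r * a * e * b, mul_mem_span_singleton e (r * a) b⟩ :=
        Subtype.ext (show r * (a * e * b) = _ by simp only [mul_assoc])
      rw [hr, t_gen, t_gen, smul_smul, mul_assoc]
    | add x y hx hy => rw [smul_add, map_add, map_add, hx, hy, smul_add]
  refine .of_split { t with map_smul' := t_smul } he.cornerModuleCombination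
    (LinearMap.ext fun x => ?_)
  show he.cornerModuleCombination (he.cornerGlue lift (σ x)) = x
  rw [IsIdempotentElem.cornerModuleCombination_cornerGlue combination_lift, gens_σ]

lemma IsIdem.mem_closure_mul {H : TwoSidedIdeal R} (hH : H.IsIdem) {h : R} (hh : h ∈ H) :
    h ∈ AddSubgroup.closure {y : R | ∃ a ∈ H, ∃ b ∈ H, y = a * b} := by
  rw [← hH] at hh
  refine (mem_span_iff_mem_addSubgroup_closure_absorbing ?_ ?_).mp hh
  · rintro x - ⟨a, ha, b, hb, rfl⟩
    exact ⟨x * a, mul_mem_left _ _ _ ha, b, hb, (mul_assoc ..).symm⟩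
  · rintro - x ⟨a, ha, b, hb, rfl⟩
    exact ⟨a, ha, b * x, mul_mem_right _ _ _ hb, mul_assoc ..⟩

theorem IsIdem.le_of_forall_exists_sub_mem {H I : TwoSidedIdeal R} {J : Set R} {k : ℕ}
    (hH : H.IsIdem) (hJ : ∀ l : List R, l.length = k → (∀ x ∈ l, x ∈ J) → l.prod = 0)
    (hHJ : ∀ h ∈ H, ∃ j ∈ J, h - j ∈ I) : H ≤ I := by
  -- Write `h` as a sum of products `a * b` and replace `a` by `j ∈ J` modulo `I`: this trades `h`
  -- for one more factor from `J` in front, until there are `k` of them.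
  suffices ∀ m, ∀ l : List R, l.length + m = k → (∀ x ∈ l, x ∈ J) → ∀ h ∈ H, l.prod * h ∈ I by
    intro h hh
    simpa using this k [] (by simp) (by simp) h hh
  intro m
  induction m with
  | zero =>
    intro l hl hlJ h _
    rw [hJ l hl hlJ, zero_mul]
    exact I.zero_mem
  | succ m ih =>
    intro l hl hlJ h hh
    have hcl := hH.mem_closure_mul hh
    clear hh
    induction hcl using AddSubgroup.closure_induction with
    | mem _ hy =>
      obtain ⟨a, ha, b, hb, rfl⟩ := hy
      obtain ⟨j, hj, haj⟩ := hHJ a ha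
      have split : l.prod * (a * b) = (l ++ [j]).prod * b + l.prod * (a - j) * b := by
        simp only [List.prod_append, List.prod_singleton, mul_sub, sub_mul, mul_assoc]
        abel
      rw [split]
      refine I.add_mem (ih _ (by simp; omega) ?_ b hb)
        (mul_mem_right _ _ _ (mul_mem_left _ _ _ haj))
      intro x hx
      rcases List.mem_append.mp hx with hx | hx
      · exact hlJ x hx
      · exact List.mem_singleton.mp hx ▸ hj
    | zero => simpa only [mul_zero] using I.zero_mem
    | add x y _ _ hx hy => simpa only [mul_add] using I.add_mem hx hy
    | neg x _ hx => simpa only [mul_neg] using I.neg_mem hx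

end TwoSidedIdeal

theorem exists_isIdempotentElem_mem_of_ker_isNilpotent_s11 {S : Type*} [Ring S] [IsSemisimpleRing S]
    (π : R →+* S) (hπ : Function.Surjective π) (hnil : ∀ x ∈ RingHom.ker π, IsNilpotent x)
    (H : TwoSidedIdeal R) :
    ∃ e, IsIdempotentElem e ∧ e ∈ H ∧ ∀ h ∈ H, h - h * e ∈ RingHom.ker π := by
  obtain ⟨ε, hε, hL⟩ := IsSemisimpleRing.ideal_eq_span_idempotent (H.asIdeal.map π)
  obtain ⟨h₀, hh₀, rfl⟩ := (Ideal.mem_map_iff_of_surjective π hπ).mp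
    (hL ▸ Ideal.mem_span_singleton_self _)
  obtain ⟨e, he, hπe⟩ := exists_isIdempotentElem_eq_of_ker_isNilpotent π hnil _ ⟨h₀, rfl⟩ hε
  refine ⟨e, he, ?_, fun h hh => ?_⟩
  · simp_rw [TwoSidedIdeal.mem_asIdeal, ← TwoSidedIdeal.ker_ringCon_mk' H,
      TwoSidedIdeal.mem_ker] at hh₀ ⊢
    have hnil' : IsNilpotent (H.ringCon.mk' (e - h₀)) :=
      (hnil _ (by simp [RingHom.mem_ker, hπe])).map _
    rw [map_sub, hh₀, sub_zero] at hnil'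
    exact (he.map _).eq_zero_of_isNilpotent hnil'
  · obtain ⟨a, ha⟩ := Ideal.mem_span_singleton'.mp (hL ▸ Ideal.mem_map_of_mem π hh : π h ∈ _)
    rw [RingHom.mem_ker, map_sub, map_mul, hπe, ← ha, hε.mul_mul_self, sub_self]

theorem IsSemiprimary.exists_isIdempotentElem_eq_span (hR : IsSemiprimary R)
    {H : TwoSidedIdeal R} (hH : H.IsIdem)
    (hHJH : ∀ a ∈ H, ∀ j ∈ Ideal.jacobson (⊥ : Ideal R), ∀ b ∈ H, a * j * b = 0) :
    ∃ e, ∃ he : IsIdempotentElem e, H = TwoSidedIdeal.span {e} ∧ IsSemisimpleRing he.Corner := by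
  obtain ⟨J, hJ, ⟨k, hk⟩, hss⟩ := hR
  let π := J.ringCon.mk'
  have hπ : Function.Surjective π := Quotient.mk''_surjective
  have hker (x : R) : x ∈ RingHom.ker π ↔ x ∈ J := by
    rw [RingHom.mem_ker, ← TwoSidedIdeal.mem_ker, TwoSidedIdeal.ker_ringCon_mk']
  have hJnil (l : List R) (hl : l.length = k + 1) (hlJ : ∀ x ∈ l, x ∈ J) : l.prod = 0 := by
    have := hk (fun i => l.get (i.cast hl.symm)) (fun i => hlJ _ (List.get_mem _ _))
    rwa [← List.ofFn_congr hl, List.ofFn_get] at this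
  have hnil (x : R) (hx : x ∈ RingHom.ker π) : IsNilpotent x := by
    refine ⟨k + 1, ?_⟩
    simpa using hJnil (List.replicate (k + 1) x) (by simp) (by simpa using (hker x).mp hx)
  obtain ⟨e, he, heH, hsub⟩ := exists_isIdempotentElem_mem_of_ker_isNilpotent_s11 π hπ hnil H
  refine ⟨e, he, le_antisymm ?_ ?_, he.isSemisimpleRing_corner_of_surjective π hπ fun x hx => ?_⟩
  · refine hH.le_of_forall_exists_sub_mem hJnil fun h hh => ⟨_, (hker _).mp (hsub h hh), ?_⟩
    rw [sub_sub_cancel]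
    exact TwoSidedIdeal.mul_mem_left _ _ _ (TwoSidedIdeal.subset_span rfl)
  · exact TwoSidedIdeal.span_le.mpr (Set.singleton_subset_iff.mpr heH)
  · have hxJ : x.1 ∈ Ideal.jacobson (⊥ : Ideal R) := by
      rw [← SetLike.mem_coe, ← hJ]
      exact (hker _).mp hx
    have h0 := hHJH e heH _ hxJ e heH
    rw [he.mul_corner_val, he.corner_val_mul] at h0
    exact Subtype.ext h0

/-- A heredity ideal of a semiprimary ring is projective both as a right `R`-module and as
a left `R`-module. -/
theorem heredityIdeal_projective (hR : IsSemiprimary R) (H : TwoSidedIdeal R)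
    (hH : IsHeredityIdeal H) :
    Module.Projective Rᵐᵒᵖ H ∧ Module.Projective R H := by
  obtain ⟨hidem, hproj, hHJH⟩ := hH
  obtain ⟨e, he, rfl, hcorner⟩ := hR.exists_isIdempotentElem_eq_span hidem hHJH
  have := Module.projective_of_isSemisimpleRing he.Corner he.CornerModule
  exact ⟨hproj, TwoSidedIdeal.projective_span_singleton he⟩
end
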